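/- Let (A,*,{·,·,·};ω) be a quadratic pre-Lie-Yamaguti algebra. Then ω is a symplectic structure on the subadjacent Lie-Yamaguti algebra A^c = (A,[·,·]_C,⟨·,·,·⟩_C); that is, for all x,y,z,w in A: ω(x,[y,z]_C)+ω(y,[z,x]_C)+ω(z,[x,y]_C)=0 and ω(z,⟨x,y,w⟩_C)−ω(x,⟨w,z,y⟩_C)+ω(y,⟨w,z,x⟩_C)−ω(w,⟨x,y,z⟩_C)=0. -/

import Mathlib

/-- A map of two variables that is linear in each variable separately. -/
def IsBilin (K : Type*) {M N P : Type*} [Field K] [AddCommGroup M] [Module K M]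
    [AddCommGroup N] [Module K N] [AddCommGroup P] [Module K P]
    (f : M → N → P) : Prop :=
  (∀ y, IsLinearMap K fun x => f x y) ∧ (∀ x, IsLinearMap K fun y => f x y)

/-- A map of three variables that is linear in each variable separately. -/
def IsTrilin (K : Type*) {M P : Type*} [Field K] [AddCommGroup M] [Module K M]
    [AddCommGroup P] [Module K P] (f : M → M → M → P) : Prop :=
  (∀ y z, IsLinearMap K fun x => f x y z) ∧
  (∀ x z, IsLinearMap K fun y => f x y z) ∧
  (∀ x y, IsLinearMap K fun z => f x y z)

/-- A Lie-Yamaguti algebra structure: a bilinear skew-symmetric binary bracket `b` and a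
trilinear ternary bracket `t`, skew-symmetric in its first two arguments, satisfying
(LY1)-(LY4). -/
def IsLieYamaguti (K : Type*) {g : Type*} [Field K] [CharZero K] [AddCommGroup g] [Module K g]
    (b : g → g → g) (t : g → g → g → g) : Prop :=
  IsBilin K b ∧ IsTrilin K t ∧
  (∀ x y, b x y = - b y x) ∧
  (∀ x y z, t x y z = - t y x z) ∧
  (∀ x y z, b (b x y) z + b (b y z) x + b (b z x) y + t x y z + t y z x + t z x y = 0) ∧
  (∀ x y z w, t (b x y) z w + t (b y z) x w + t (b z x) y w = 0) ∧
  (∀ x y z w, t x y (b z w) = b (t x y z) w + b z (t x y w)) ∧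
  (∀ x y z w u, t x y (t z w u) = t (t x y z) w u + t z (t x y w) u + t z w (t x y u))

/-- The operator `D(x,y) = μ(y,x) − μ(x,y) + ρ(x)ρ(y) − ρ(y)ρ(x) − ρ([x,y])`. -/
def LYD (K : Type*) {g V : Type*} [Field K] [CharZero K] [AddCommGroup g] [Module K g]
    [AddCommGroup V] [Module K V]
    (b : g → g → g) (ρ : g → Module.End K V) (μ : g → g → Module.End K V)
    (x y : g) : Module.End K V :=
  μ y x - μ x y + ρ x * ρ y - ρ y * ρ x - ρ (b x y)

/-- A representation of a Lie-Yamaguti algebra `(g, b, t)` on `V`. -/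
def IsLYRep (K : Type*) {g V : Type*} [Field K] [CharZero K] [AddCommGroup g] [Module K g]
    [AddCommGroup V] [Module K V]
    (b : g → g → g) (t : g → g → g → g)
    (ρ : g → Module.End K V) (μ : g → g → Module.End K V) : Prop :=
  IsLinearMap K ρ ∧ IsBilin K μ ∧
  (∀ x y z, μ (b x y) z - μ x z * ρ y + μ y z * ρ x = 0) ∧
  (∀ x y z, μ x (b y z) - ρ y * μ x z + ρ z * μ x y = 0) ∧
  (∀ x y z, ρ (t x y z) = LYD K b ρ μ x y * ρ z - ρ z * LYD K b ρ μ x y) ∧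
  (∀ x y z w, μ z w * μ x y - μ y w * μ x z - μ x (t y z w) + LYD K b ρ μ y z * μ x w = 0) ∧
  (∀ x y z w, μ (t x y z) w + μ z (t x y w) = LYD K b ρ μ x y * μ z w - μ z w * LYD K b ρ μ x y)

/-- A relative Rota-Baxter operator on a Lie-Yamaguti algebra `(g, b, t)` with respect to a
representation `(V; ρ, μ)`. -/
def IsRelRB (K : Type*) {g V : Type*} [Field K] [CharZero K] [AddCommGroup g] [Module K g]
    [AddCommGroup V] [Module K V]
    (b : g → g → g) (t : g → g → g → g)
    (ρ : g → Module.End K V) (μ : g → g → Module.End K V) (T : V → g) : Prop :=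
  IsLinearMap K T ∧
  (∀ u v, b (T u) (T v) = T (ρ (T u) v - ρ (T v) u)) ∧
  (∀ u v w, t (T u) (T v) (T w) =
    T (LYD K b ρ μ (T u) (T v) w + μ (T v) (T w) u - μ (T u) (T w) v))

/-- The commutator `[x,y]_C = x*y − y*x`. -/
def preC {A : Type*} [AddCommGroup A] (m : A → A → A) (x y : A) : A := m x y - m y x

/-- The associator `(x,y,z) = (x*y)*z − x*(y*z)`. -/
def preAssoc {A : Type*} [AddCommGroup A] (m : A → A → A) (x y z : A) : A :=
  m (m x y) z - m x (m y z)

/-- `{x,y,z}_D = {z,y,x} − {z,x,y} + (y,x,z) − (x,y,z)`. -/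
def preD {A : Type*} [AddCommGroup A] (m : A → A → A) (br : A → A → A → A) (x y z : A) : A :=
  br z y x - br z x y + preAssoc m y x z - preAssoc m x y z

/-- A pre-Lie-Yamaguti algebra structure on `A`. -/
def IsPreLY (K : Type*) {A : Type*} [Field K] [CharZero K] [AddCommGroup A] [Module K A]
    (m : A → A → A) (br : A → A → A → A) : Prop :=
  IsBilin K m ∧ IsTrilin K br ∧
  (∀ x y z w, br z (preC m x y) w - br (m y z) x w + br (m x z) y w = 0) ∧
  (∀ x y z w, br x y (preC m z w) = m z (br x y w) - m w (br x y z)) ∧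
  (∀ x y z w t, br (br x y z) w t - br (br x y w) z t - br x y (preD m br z w t)
      - br x y (br z w t) + br x y (br w z t) + preD m br z w (br x y t) = 0) ∧
  (∀ x y z w t, br z (preD m br x y w) t + br z (br x y w) t - br z (br y x w) t
      + br z w (preD m br x y t) + br z w (br x y t) - br z w (br y x t)
      = preD m br x y (br z w t) - br (preD m br x y z) w t) ∧
  (∀ x y z w, m (preD m br x y z) w + m (br x y z) w - m (br y x z) w
      = preD m br x y (m z w) - m z (preD m br x y w))

/-- The ternary bracket `⟨x,y,z⟩_C = {x,y,z}_D + {x,y,z} − {y,x,z}` of the subadjacent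
Lie-Yamaguti algebra of a pre-Lie-Yamaguti algebra. -/
def subT {A : Type*} [AddCommGroup A] (m : A → A → A) (br : A → A → A → A) (x y z : A) : A :=
  preD m br x y z + br x y z - br y x z

/-- A symplectic structure on a Lie-Yamaguti algebra `(g, b, t)`: a nondegenerate
skew-symmetric bilinear form satisfying the two cocycle conditions. -/
def IsSymplectic (K : Type*) {g : Type*} [Field K] [CharZero K] [AddCommGroup g] [Module K g]
    (b : g → g → g) (t : g → g → g → g) (ω : g → g → K) : Prop :=
  IsBilin K ω ∧ (∀ x y, ω x y = - ω y x) ∧ (∀ x, (∀ y, ω x y = 0) → x = 0) ∧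
  (∀ x y z, ω x (b y z) + ω y (b z x) + ω z (b x y) = 0) ∧
  (∀ x y z w, ω z (t x y w) - ω x (t w z y) + ω y (t w z x) - ω w (t x y z) = 0)

/-- The dual map `ρ*` defined by `(ρ*(x) α)(v) = −α(ρ(x) v)`. -/
def dualRho (K : Type*) {g V : Type*} [Field K] [CharZero K] [AddCommGroup g] [Module K g]
    [AddCommGroup V] [Module K V] (ρ : g → Module.End K V) (x : g) :
    Module.End K (Module.Dual K V) := -(ρ x).dualMap

/-- The dual map `μ*` defined by `(μ*(x,y) α)(v) = −α(μ(x,y) v)`. -/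
def dualMu (K : Type*) {g V : Type*} [Field K] [CharZero K] [AddCommGroup g] [Module K g]
    [AddCommGroup V] [Module K V] (μ : g → g → Module.End K V) (x y : g) :
    Module.End K (Module.Dual K V) := -(μ x y).dualMap

/-- Left multiplication `L_x` of a pre-Lie-Yamaguti algebra, as a linear endomorphism. -/
def Llin (K : Type*) {A : Type*} [Field K] [CharZero K] [AddCommGroup A] [Module K A]
    (m : A → A → A) (hm : IsBilin K m) (x : A) : Module.End K A :=
  IsLinearMap.mk' (fun v => m x v) (hm.2 x)

/-- `𝓡(x,y) : z ↦ {z,x,y}` of a pre-Lie-Yamaguti algebra, as a linear endomorphism. -/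
def Rlin (K : Type*) {A : Type*} [Field K] [CharZero K] [AddCommGroup A] [Module K A]
    (br : A → A → A → A) (hbr : IsTrilin K br) (x y : A) : Module.End K A :=
  IsLinearMap.mk' (fun v => br v x y) (hbr.1 x y)

/-- `𝓛(x,y) : z ↦ {x,y,z}_D` of a pre-Lie-Yamaguti algebra, as a linear endomorphism. -/
def Dlin (K : Type*) {A : Type*} [Field K] [CharZero K] [AddCommGroup A] [Module K A]
    (m : A → A → A) (br : A → A → A → A) (hm : IsBilin K m) (hbr : IsTrilin K br)
    (x y : A) : Module.End K A :=
  Rlin K br hbr y x - Rlin K br hbr x y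
    + (Llin K m hm (m y x) - Llin K m hm y * Llin K m hm x)
    - (Llin K m hm (m x y) - Llin K m hm x * Llin K m hm y)

/-!
Write `T = ⟨·,·,·⟩_C` and `J` for the Jacobiator of `[·,·]_C`. The quadratic conditions say that
`L_x` is ω-adjoint to `-[x,·]_C` and `𝓡(y,z)` to `T(·,z,y)`; the first gives the binary cocycle
condition at once. Together they make `𝓛(x,y)` ω-adjoint to `T(·,x,y) - T(·,y,x) - J(y,x,·)`,
which is `-T(x,y,·)` because `J` plus the cyclic sum of `T` vanishes (axiom (LY1) of the
subadjacent brackets, an identity for any bilinear `*` and any `{·,·,·}`). Rewriting the ternary cocycle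
condition with the adjunction of `𝓡` reduces it to exactly this adjunction of `𝓛`.
-/

namespace IsBilin

variable {K M N P : Type*} [Field K] [AddCommGroup M] [Module K M] [AddCommGroup N] [Module K N]
  [AddCommGroup P] [Module K P] {f : M → N → P}

theorem map_add_left (hf : IsBilin K f) (x x' : M) (y : N) : f (x + x') y = f x y + f x' y :=
  (hf.1 y).map_add x x'

theorem map_sub_left (hf : IsBilin K f) (x x' : M) (y : N) : f (x - x') y = f x y - f x' y :=
  (hf.1 y).map_sub x x'

theorem map_add_right (hf : IsBilin K f) (x : M) (y y' : N) : f x (y + y') = f x y + f x y' :=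
  (hf.2 x).map_add y y'

theorem map_sub_right (hf : IsBilin K f) (x : M) (y y' : N) : f x (y - y') = f x y - f x y' :=
  (hf.2 x).map_sub y y'

end IsBilin

section Subadjacent

variable {K A : Type*} [Field K] [AddCommGroup A] [Module K A] {m : A → A → A}
  {br : A → A → A → A}

theorem subT_swap (x y z : A) : subT m br x y z = - subT m br y x z := by
  simp only [subT, preD]
  abel

def jacobiatorC (m : A → A → A) (x y z : A) : A :=
  preC m (preC m x y) z + preC m (preC m y z) x + preC m (preC m z x) y

theorem jacobiatorC_add_subT_cyclic (hm : IsBilin K m) (x y z : A) :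
    jacobiatorC m x y z + subT m br x y z + subT m br y z x + subT m br z x y = 0 := by
  simp only [jacobiatorC, subT, preD, preAssoc, preC, hm.map_sub_left, hm.map_sub_right]
  abel

end Subadjacent

section Quadratic

variable {K A : Type*} [Field K] [AddCommGroup A] [Module K A] {m : A → A → A}
  {br : A → A → A → A} {ω : A → A → K}

theorem omega_preC_cyclic (hbil : IsBilin K ω) (hskew : ∀ x y, ω x y = - ω y x)
    (hq1 : ∀ x y z, ω (m x y) z = - ω y (preC m x z)) (x y z : A) :
    ω x (preC m y z) + ω y (preC m z x) + ω z (preC m x y) = 0 := by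
  have hxz := hq1 x z y
  have hzx := hq1 z x y
  simp only [preC, hbil.map_sub_right] at hxz hzx ⊢
  linear_combination hxz - hzx + hskew (m z x) y - hskew (m x z) y

theorem omega_preAssoc_left (hbil : IsBilin K ω)
    (hq1 : ∀ x y z, ω (m x y) z = - ω y (preC m x z)) (a b c w : A) :
    ω (preAssoc m a b c) w = - ω c (preC m (m a b) w) - ω c (preC m b (preC m a w)) := by
  rw [preAssoc, hbil.map_sub_left, hq1, hq1 a, hq1 b]
  ring

theorem omega_preAssoc_sub_preAssoc_left (hm : IsBilin K m) (hbil : IsBilin K ω)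
    (hq1 : ∀ x y z, ω (m x y) z = - ω y (preC m x z)) (a b c w : A) :
    ω (preAssoc m a b c - preAssoc m b a c) w = - ω c (jacobiatorC m a b w) := by
  rw [hbil.map_sub_left, omega_preAssoc_left hbil hq1, omega_preAssoc_left hbil hq1]
  simp only [jacobiatorC, preC, hm.map_sub_left, hm.map_sub_right, hbil.map_add_right,
    hbil.map_sub_right]
  ring

theorem omega_preD_add_omega_subT (hm : IsBilin K m) (hbil : IsBilin K ω)
    (hq1 : ∀ x y z, ω (m x y) z = - ω y (preC m x z))
    (hq2 : ∀ x y z w, ω (br x y z) w = ω x (subT m br w z y)) (x y z w : A) :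
    ω (preD m br x y z) w + ω z (subT m br x y w) = 0 := by
  have hJ : jacobiatorC m y x w = subT m br x y w + subT m br w x y - subT m br w y x := by
    have := jacobiatorC_add_subT_cyclic (br := br) hm y x w
    rw [subT_swap y x, subT_swap x w] at this
    linear_combination (norm := module) this
  rw [preD, add_sub_assoc, hbil.map_add_left, hbil.map_sub_left, hq2, hq2,
    omega_preAssoc_sub_preAssoc_left hm hbil hq1, hJ, hbil.map_sub_right, hbil.map_add_right]
  ring

end Quadratic

/-- the bilinear form of a quadratic pre-Lie-Yamaguti algebra is a
symplectic structure on the subadjacent Lie-Yamaguti algebra. -/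
theorem statement19 (K A : Type*) [Field K] [CharZero K] [AddCommGroup A] [Module K A]
    (m : A → A → A) (br : A → A → A → A) (h : IsPreLY K m br)
    (ω : A → A → K) (hbil : IsBilin K ω)
    (hskew : ∀ x y, ω x y = - ω y x)
    (hnd : ∀ x, (∀ y, ω x y = 0) → x = 0)
    (hq1 : ∀ x y z, ω (m x y) z = - ω y (preC m x z))
    (hq2 : ∀ x y z w, ω (br x y z) w = ω x (subT m br w z y)) :
    IsSymplectic K (preC m) (subT m br) ω := by
  refine ⟨hbil, hskew, hnd, omega_preC_cyclic hbil hskew hq1, fun x y z w => ?_⟩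
  have hadj := omega_preD_add_omega_subT h.1 hbil hq1 hq2 x y z w
  rw [← hq2 x y z w, ← hq2 y x z w, hskew w]
  simp only [subT, hbil.map_sub_left, hbil.map_add_left] at hadj ⊢
  linear_combination hadj
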